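/- Let σ > 0, μ ∈ ℝ, and let f_{σ,μ} be the Gaussian function. Then for every α > 0 and every nonnegative integer k, the best approximation error satisfies E_k(f_{σ,μ}) ≤ (2/(ασ)) e^{α²} (1 + ασ)^{−k}. -/

import Mathlib

/-- The closed Bernstein ellipse region with parameter `χ`: the region bounded by the
ellipse with foci `±1` and half-axes `a = (χ²+1)/(2χ)`, `b = (χ²-1)/(2χ)`. -/
noncomputable def bernsteinEllipse (χ : ℝ) : Set ℂ :=
  {z : ℂ | z.re ^ 2 / ((χ ^ 2 + 1) / (2 * χ)) ^ 2
    + z.im ^ 2 / ((χ ^ 2 - 1) / (2 * χ)) ^ 2 ≤ 1}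

/-- Best approximation error of `f` on `[-1,1]` by real polynomials of degree ≤ `k`. -/
noncomputable def approxError (f : ℝ → ℝ) (k : ℕ) : ℝ :=
  sInf {e : ℝ | ∃ p : Polynomial ℝ, p.natDegree ≤ k ∧
    e = ⨆ x : Set.Icc (-1 : ℝ) 1, |f x.1 - p.eval x.1|}

/-- The Gaussian function `f_{σ,μ}(z) = exp (-(z-μ)²/σ²)` on `ℂ`. -/
noncomputable def gaussFun (σ μ : ℝ) (z : ℂ) : ℂ :=
  Complex.exp (-(z - (μ : ℂ)) ^ 2 / (σ : ℂ) ^ 2)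

/-!
Bernstein's argument. With `J w = (w + w⁻¹) / 2`, the function `θ ↦ F (cos θ) = F (J (e^{iθ}))`
has Fourier coefficients `c n = (2πi)⁻¹ ∮_{|w|=1} w^(-n-1) F (J w) dw`. If `F ∘ J` is holomorphic
and bounded by `M` on the annulus `r⁻¹ ≤ |w| ≤ r`, moving the contour to `|w| = r^(±1)` gives
`‖c n‖ ≤ M r^(-|n|)`. As `θ ↦ cos θ` is even, the Fourier series is a cosine series, that is a
Chebyshev series `∑ aₙ Tₙ` with `|aₙ| ≤ 2 M r^(-n)`, and its truncation at degree `k` is within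
`2 M r^(-k) / (r - 1)` of `F` on `[-1, 1]`. For the Gaussian take `r = 1 + ασ`: `J` maps the
annulus into the strip `|Im z| ≤ (r - r⁻¹) / 2 ≤ ασ`, on which
`|f_{σ,μ} z| ≤ e^((Im z)² / σ²) ≤ e^(α²)`.
-/

open Real Complex Metric Polynomial MeasureTheory

noncomputable section

theorem approxError_le_of_abs_sub_le {f : ℝ → ℝ} {k : ℕ} {p : ℝ[X]} (hp : p.natDegree ≤ k)
    {B : ℝ} (hB : ∀ x ∈ Set.Icc (-1 : ℝ) 1, |f x - p.eval x| ≤ B) : approxError f k ≤ B := by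
  have : Nonempty (Set.Icc (-1 : ℝ) 1) := ⟨⟨0, by norm_num, by norm_num⟩⟩
  refine csInf_le_of_le ⟨0, ?_⟩ ⟨p, hp, rfl⟩ (ciSup_le fun x => hB x.1 x.2)
  rintro e ⟨q, -, rfl⟩
  exact Real.iSup_nonneg fun x => abs_nonneg _

theorem approxError_le_of_hasSum_chebyshev {f : ℝ → ℝ} {a : ℕ → ℝ} {C ρ : ℝ} (hρ₀ : 0 ≤ ρ)
    (hρ₁ : ρ < 1)
    (hf : ∀ x ∈ Set.Icc (-1 : ℝ) 1, HasSum (fun n : ℕ => a n * (Chebyshev.T ℝ n).eval x) (f x))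
    (ha : ∀ n, |a n| ≤ C * ρ ^ n) (k : ℕ) :
    approxError f k ≤ C * ρ ^ (k + 1) / (1 - ρ) := by
  set p : ℝ[X] := ∑ n ∈ Finset.range (k + 1), Polynomial.C (a n) * Chebyshev.T ℝ n
  have hp : p.natDegree ≤ k := by
    refine natDegree_sum_le_of_forall_le _ _ fun n hn => (natDegree_C_mul_le _ _).trans ?_
    rw [Chebyshev.natDegree_T, Int.natAbs_natCast]
    exact Nat.lt_succ_iff.mp (Finset.mem_range.mp hn)
  refine approxError_le_of_abs_sub_le hp fun x hx => ?_
  have htail := (hasSum_nat_add_iff' (k + 1)).mpr (hf x hx)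
  have hgeom : HasSum (fun n : ℕ => C * ρ ^ (n + (k + 1))) (C * ρ ^ (k + 1) / (1 - ρ)) := by
    simpa [pow_add, mul_comm, mul_left_comm, mul_assoc, div_eq_mul_inv] using
      (hasSum_geometric_of_lt_one hρ₀ hρ₁).mul_left (C * ρ ^ (k + 1))
  have hpx : p.eval x = ∑ n ∈ Finset.range (k + 1), a n * (Chebyshev.T ℝ n).eval x := by
    simp [p, eval_finsetSum]
  rw [hpx, ← Real.norm_eq_abs]
  refine htail.norm_le_of_bounded hgeom fun n => ?_
  have hT := Chebyshev.abs_eval_T_real_le_one (n + (k + 1) : ℕ) (abs_le.mpr ⟨hx.1, hx.2⟩)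
  rw [Real.norm_eq_abs, abs_mul]
  exact (mul_le_of_le_one_right (abs_nonneg _) hT).trans (ha _)

instance : Fact (0 < 2 * π) := ⟨two_pi_pos⟩

local notation "𝕋" => AddCircle (2 * π)

theorem fourier_coe_eq_circleMap_zpow (n : ℤ) (θ : ℝ) :
    fourier n (θ : 𝕋) = circleMap 0 1 θ ^ n := by
  rw [fourier_coe_apply, circleMap_zero, ofReal_one, one_mul, ← exp_int_mul]
  congr 1
  field_simp [ofReal_ne_zero.mpr pi_ne_zero]
  push_cast
  ring

theorem fourier_one_coe (θ : ℝ) : fourier 1 (θ : 𝕋) = circleMap 0 1 θ := by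
  rw [fourier_coe_eq_circleMap_zpow, zpow_one]

theorem fourierCoeff_comp_fourier_one (Φ : ℂ → ℂ) (n : ℤ) :
    fourierCoeff (fun x : 𝕋 => Φ (fourier 1 x)) n =
      (2 * π * I)⁻¹ * ∮ w in C(0, 1), w ^ (-(n + 1)) * Φ w := by
  have hintegrand : ∀ θ : ℝ,
      deriv (circleMap 0 1) θ • (circleMap 0 1 θ ^ (-(n + 1)) * Φ (circleMap 0 1 θ)) =
        I * (fourier (-n) (θ : 𝕋) • Φ (fourier 1 (θ : 𝕋))) := by
    intro θ
    have hne : circleMap 0 1 θ ≠ 0 := circleMap_ne_center one_ne_zero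
    rw [deriv_circleMap, fourier_coe_eq_circleMap_zpow, fourier_one_coe, smul_eq_mul, smul_eq_mul,
      show -n = 1 + -(n + 1) by ring, zpow_add₀ hne, zpow_one]
    ring
  rw [fourierCoeff_eq_intervalIntegral _ n 0, zero_add, circleIntegral,
    intervalIntegral.integral_congr (fun θ _ => hintegrand θ), intervalIntegral.integral_const_mul,
    real_smul]
  have : (π : ℂ) ≠ 0 := ofReal_ne_zero.mpr pi_ne_zero
  push_cast
  field_simp

theorem circleIntegral_zpow_mul_eq_of_differentiableAt {Φ : ℂ → ℂ} {r R : ℝ} (hr : 0 < r)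
    (hrR : r ≤ R) (hΦ : ∀ w : ℂ, r ≤ ‖w‖ → ‖w‖ ≤ R → DifferentiableAt ℂ Φ w) (m : ℤ) :
    (∮ w in C(0, R), w ^ m * Φ w) = ∮ w in C(0, r), w ^ m * Φ w := by
  have hd : ∀ w : ℂ, r ≤ ‖w‖ → ‖w‖ ≤ R → DifferentiableAt ℂ (fun w => w ^ m * Φ w) w :=
    fun w h₁ h₂ => (differentiableAt_zpow.mpr (Or.inl (norm_pos_iff.mp (hr.trans_le h₁)))).mul
      (hΦ w h₁ h₂)
  refine circleIntegral_eq_of_differentiable_on_annulus_off_countable hr hrR Set.countable_empty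
    (fun w hw => ?_) (fun w hw => ?_)
  · simp only [Set.mem_sdiff, mem_closedBall, mem_ball, dist_zero_right, not_lt] at hw
    exact (hd w hw.2 hw.1).continuousAt.continuousWithinAt
  · simp only [Set.sdiff_empty, Set.mem_sdiff, mem_closedBall, mem_ball, dist_zero_right,
      not_le] at hw
    exact hd w hw.2.le hw.1.le

theorem norm_circleIntegral_zpow_mul_le {Φ : ℂ → ℂ} {R M : ℝ} (hR : 0 < R)
    (hM : ∀ w : ℂ, ‖w‖ = R → ‖Φ w‖ ≤ M) (n : ℤ) :
    ‖∮ w in C(0, R), w ^ (-(n + 1)) * Φ w‖ ≤ 2 * π * M * R ^ (-n) := by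
  have hbound : ∀ w ∈ sphere (0 : ℂ) R, ‖w ^ (-(n + 1)) * Φ w‖ ≤ R ^ (-(n + 1)) * M := by
    intro w hw
    rw [mem_sphere_zero_iff_norm] at hw
    rw [norm_mul, norm_zpow, hw]
    exact mul_le_mul_of_nonneg_left (hM w hw) (by positivity)
  calc ‖∮ w in C(0, R), w ^ (-(n + 1)) * Φ w‖ ≤ 2 * π * R * (R ^ (-(n + 1)) * M) :=
        circleIntegral.norm_integral_le_of_norm_le_const hR.le hbound
    _ = 2 * π * M * R ^ (-n) := by
        rw [show -n = 1 + -(n + 1) by ring, zpow_add₀ hR.ne', zpow_one]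
        ring

theorem norm_fourierCoeff_comp_fourier_one_le {Φ : ℂ → ℂ} {r M : ℝ} (hr : 1 ≤ r)
    (hd : ∀ w : ℂ, r⁻¹ ≤ ‖w‖ → ‖w‖ ≤ r → DifferentiableAt ℂ Φ w)
    (hM : ∀ w : ℂ, r⁻¹ ≤ ‖w‖ → ‖w‖ ≤ r → ‖Φ w‖ ≤ M) (n : ℤ) :
    ‖fourierCoeff (fun x : 𝕋 => Φ (fourier 1 x)) n‖ ≤ M * r⁻¹ ^ n.natAbs := by
  have hr0 : 0 < r := one_pos.trans_le hr
  have hr' : r⁻¹ ≤ 1 := inv_le_one_of_one_le₀ hr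
  have hnorm : ‖fourierCoeff (fun x : 𝕋 => Φ (fourier 1 x)) n‖ =
      (2 * π)⁻¹ * ‖∮ w in C(0, 1), w ^ (-(n + 1)) * Φ w‖ := by
    rw [fourierCoeff_comp_fourier_one, norm_mul, norm_inv, norm_mul, norm_I, mul_one, norm_mul,
      Complex.norm_two, norm_real, Real.norm_of_nonneg pi_pos.le]
  rw [hnorm, inv_mul_le_iff₀ two_pi_pos]
  obtain ⟨m, rfl | rfl⟩ := Int.eq_nat_or_neg n
  · rw [← circleIntegral_zpow_mul_eq_of_differentiableAt one_pos hr
      (fun w h₁ h₂ => hd w (hr'.trans h₁) h₂)]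
    refine (norm_circleIntegral_zpow_mul_le hr0
      (fun w hw => hM w (hw ▸ hr'.trans hr) hw.le) _).trans_eq ?_
    rw [zpow_neg, zpow_natCast, Int.natAbs_natCast, inv_pow]
    ring
  · rw [circleIntegral_zpow_mul_eq_of_differentiableAt (inv_pos.mpr hr0) hr'
      (fun w h₁ h₂ => hd w h₁ (h₂.trans hr))]
    refine (norm_circleIntegral_zpow_mul_le (inv_pos.mpr hr0)
      (fun w hw => hM w hw.ge (hw ▸ hr'.trans hr)) _).trans_eq ?_
    rw [neg_neg, zpow_natCast, Int.natAbs_neg, Int.natAbs_natCast]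
    ring

theorem fourierCoeff_neg_of_even {T : ℝ} [Fact (0 < T)] {E : Type*} [NormedAddCommGroup E]
    [NormedSpace ℂ E] {f : AddCircle T → E} (hf : ∀ x, f (-x) = f x) (n : ℤ) :
    fourierCoeff f (-n) = fourierCoeff f n := by
  rw [fourierCoeff, fourierCoeff, ← integral_neg_eq_self]
  congr 1 with x
  simp [hf]

theorem fourier_add_fourier_neg (n : ℤ) (θ : ℝ) :
    fourier n (θ : 𝕋) + fourier (-n) (θ : 𝕋) = 2 * Real.cos (n * θ) := by
  rw [fourier_coe_eq_circleMap_zpow, fourier_coe_eq_circleMap_zpow, circleMap_zero, ofReal_one,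
    one_mul, ← exp_int_mul, ← exp_int_mul, ofReal_cos, two_cos]
  push_cast
  ring_nf

theorem hasSum_fourierCoeff_mul_cos_of_even {g : C(𝕋, ℂ)} (hsum : Summable (fourierCoeff g))
    (heven : ∀ x, g (-x) = g x) (θ : ℝ) :
    HasSum (fun n : ℕ => (if n = 0 then 1 else 2) * fourierCoeff g n * Real.cos (n * θ))
      (g θ) := by
  -- pairing `n` with `-n` counts the term `n = 0` twice
  have h := ((has_pointwise_sum_fourier_series_of_summable hsum θ).nat_add_neg).sub
    (hasSum_ite_eq 0 (fourierCoeff g 0))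
  rw [fourier_zero, smul_eq_mul, mul_one, add_sub_cancel_right] at h
  refine h.congr_fun fun n => ?_
  rw [fourierCoeff_neg_of_even heven, smul_eq_mul, smul_eq_mul, ← mul_add,
    fourier_add_fourier_neg, Int.cast_natCast]
  rcases eq_or_ne n 0 with rfl | hn
  · simp only [if_true, Nat.cast_zero, zero_mul, Real.cos_zero, ofReal_one]
    ring
  · simp only [hn, if_false, sub_zero]
    ring

def joukowski (w : ℂ) : ℂ := (w + w⁻¹) / 2

theorem joukowski_inv (w : ℂ) : joukowski w⁻¹ = joukowski w := by
  rw [joukowski, joukowski, inv_inv, add_comm]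

theorem joukowski_circleMap (θ : ℝ) : joukowski (circleMap 0 1 θ) = Real.cos θ := by
  rw [joukowski, circleMap_zero, ofReal_one, one_mul, ← Complex.exp_neg, ofReal_cos, Complex.cos]
  ring_nf

theorem differentiableAt_joukowski {w : ℂ} (hw : w ≠ 0) : DifferentiableAt ℂ joukowski w :=
  (differentiableAt_id.add (differentiableAt_inv hw)).div_const 2

theorem abs_im_joukowski_le {r : ℝ} {w : ℂ} (h₁ : r⁻¹ ≤ ‖w‖) (h₂ : ‖w‖ ≤ r) :
    |(joukowski w).im| ≤ (r - r⁻¹) / 2 := by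
  rcases eq_or_ne w 0 with rfl | hw
  · simp only [joukowski, inv_zero, add_zero, zero_div, zero_im, abs_zero, norm_zero] at h₁ h₂ ⊢
    linarith
  have him : (joukowski w).im = w.im / ‖w‖ * (‖w‖ - ‖w‖⁻¹) / 2 := by
    rw [joukowski, div_ofNat_im, add_im, inv_im, normSq_eq_norm_sq]
    field_simp
    ring
  set s := ‖w‖
  have hs : 0 < s := norm_pos_iff.mpr hw
  have hq : |w.im / s| ≤ 1 := by
    rw [abs_div, abs_of_pos hs, div_le_one hs]
    exact abs_im_le_norm w
  have hinv₁ : s⁻¹ ≤ r := inv_le_of_inv_le₀ (hs.trans_le h₂) h₁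
  have hinv₂ : r⁻¹ ≤ s⁻¹ := inv_anti₀ hs h₂
  have hd : |s - s⁻¹| ≤ r - r⁻¹ := abs_le.mpr ⟨by linarith, by linarith⟩
  rw [him, abs_div, abs_mul, abs_two]
  gcongr
  calc |w.im / s| * |s - s⁻¹| ≤ 1 * (r - r⁻¹) := by gcongr
    _ = r - r⁻¹ := one_mul _

def joukowskiPullback (F : ℂ → ℂ) (x : 𝕋) : ℂ := F (joukowski (fourier 1 x))

theorem joukowskiPullback_neg (F : ℂ → ℂ) (x : 𝕋) :
    joukowskiPullback F (-x) = joukowskiPullback F x := by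
  have h : fourier 1 (-x) = (fourier 1 x)⁻¹ := by simp [fourier_apply, AddCircle.toCircle_neg]
  rw [joukowskiPullback, joukowskiPullback, h, joukowski_inv]

theorem joukowskiPullback_coe (F : ℂ → ℂ) (θ : ℝ) :
    joukowskiPullback F θ = F (Real.cos θ) := by
  rw [joukowskiPullback, fourier_one_coe, joukowski_circleMap]

theorem exists_hasSum_chebyshev_of_joukowski {f : ℝ → ℝ} {F : ℂ → ℂ} {r M : ℝ} (hr : 1 < r)
    (hfF : ∀ x ∈ Set.Icc (-1 : ℝ) 1, F x = f x)
    (hd : ∀ w : ℂ, r⁻¹ ≤ ‖w‖ → ‖w‖ ≤ r → DifferentiableAt ℂ F (joukowski w))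
    (hM : ∀ w : ℂ, r⁻¹ ≤ ‖w‖ → ‖w‖ ≤ r → ‖F (joukowski w)‖ ≤ M) :
    ∃ a : ℕ → ℝ, (∀ x ∈ Set.Icc (-1 : ℝ) 1,
      HasSum (fun n : ℕ => a n * (Chebyshev.T ℝ n).eval x) (f x)) ∧
      ∀ n, |a n| ≤ 2 * M * r⁻¹ ^ n := by
  have hdΦ : ∀ w : ℂ, r⁻¹ ≤ ‖w‖ → ‖w‖ ≤ r → DifferentiableAt ℂ (fun w => F (joukowski w)) w :=
    fun w h₁ h₂ => (hd w h₁ h₂).comp w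
      (differentiableAt_joukowski (norm_pos_iff.mp ((inv_pos.mpr (one_pos.trans hr)).trans_le h₁)))
  have hρ₀ : 0 ≤ r⁻¹ := inv_nonneg.mpr (one_pos.trans hr).le
  have hρ₁ : r⁻¹ < 1 := inv_lt_one_of_one_lt₀ hr
  let g : C(𝕋, ℂ) := ⟨joukowskiPullback F, continuous_iff_continuousAt.mpr fun x =>
    (hdΦ _ (Circle.norm_coe _ ▸ hρ₁.le) (Circle.norm_coe _ ▸ hr.le)).continuousAt.comp
      (fourier 1).continuous.continuousAt⟩
  set c := fourierCoeff g
  have hc : ∀ n, ‖c n‖ ≤ M * r⁻¹ ^ n.natAbs := norm_fourierCoeff_comp_fourier_one_le hr.le hdΦ hM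
  have hsum : Summable c := by
    refine Summable.of_norm_bounded (Summable.of_nat_of_neg ?_ ?_) hc <;>
      simpa using (summable_geometric_of_lt_one hρ₀ hρ₁).mul_left M
  refine ⟨fun n => (if n = 0 then 1 else 2) * (c n).re, fun x hx => ?_, fun n => ?_⟩
  · obtain ⟨θ, rfl⟩ : ∃ θ, Real.cos θ = x := ⟨arccos x, cos_arccos hx.1 hx.2⟩
    have h := hasSum_re (hasSum_fourierCoeff_mul_cos_of_even hsum (joukowskiPullback_neg F) θ)
    rw [show g θ = F (Real.cos θ) from joukowskiPullback_coe F θ, hfF _ hx, ofReal_re] at h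
    refine h.congr_fun fun n => ?_
    rw [Chebyshev.T_real_cos, Int.cast_natCast]
    split_ifs with hn <;> simp [hn, c, -ofReal_cos]
  · have hre : |(c n).re| ≤ M * r⁻¹ ^ n := by
      simpa using (abs_re_le_norm (c n)).trans (hc n)
    have hcoef : |(if n = 0 then (1 : ℝ) else 2)| ≤ 2 := by split_ifs <;> norm_num
    rw [abs_mul, mul_assoc]
    exact mul_le_mul hcoef hre (abs_nonneg _) zero_le_two

theorem approxError_le_of_joukowski {f : ℝ → ℝ} {F : ℂ → ℂ} {r M : ℝ} (hr : 1 < r)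
    (hfF : ∀ x ∈ Set.Icc (-1 : ℝ) 1, F x = f x)
    (hd : ∀ w : ℂ, r⁻¹ ≤ ‖w‖ → ‖w‖ ≤ r → DifferentiableAt ℂ F (joukowski w))
    (hM : ∀ w : ℂ, r⁻¹ ≤ ‖w‖ → ‖w‖ ≤ r → ‖F (joukowski w)‖ ≤ M) (k : ℕ) :
    approxError f k ≤ 2 * M / (r - 1) * (r ^ k)⁻¹ := by
  obtain ⟨a, hf, ha⟩ := exists_hasSum_chebyshev_of_joukowski hr hfF hd hM
  refine (approxError_le_of_hasSum_chebyshev (inv_nonneg.mpr (one_pos.trans hr).le)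
    (inv_lt_one_of_one_lt₀ hr) hf ha k).trans_eq ?_
  have : r - 1 ≠ 0 := sub_ne_zero.mpr hr.ne'
  have : r ≠ 0 := (one_pos.trans hr).ne'
  rw [inv_pow]
  field_simp
  ring

theorem norm_gaussFun_le (σ μ : ℝ) (z : ℂ) : ‖gaussFun σ μ z‖ ≤ Real.exp (z.im ^ 2 / σ ^ 2) := by
  have hre : (-(z - μ) ^ 2 / (σ : ℂ) ^ 2).re = (z.im ^ 2 - (z.re - μ) ^ 2) / σ ^ 2 := by
    rw [← ofReal_pow, div_ofReal_re]
    simp only [neg_re, sq, mul_re, sub_re, sub_im, ofReal_re, ofReal_im]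
    ring
  rw [gaussFun, norm_exp, hre, Real.exp_le_exp]
  gcongr
  linarith [sq_nonneg (z.re - μ)]

theorem gaussFun_ofReal (σ μ x : ℝ) : gaussFun σ μ x = Real.exp (-(x - μ) ^ 2 / σ ^ 2) := by
  rw [gaussFun, ofReal_exp]
  push_cast
  ring_nf

theorem differentiable_gaussFun (σ μ : ℝ) : Differentiable ℂ (gaussFun σ μ) :=
  differentiable_exp.comp (((differentiable_id.sub_const _).pow 2).neg.div_const _)

end

/-- Best polynomial approximation of the Gaussian:
`E_k(f_{σ,μ}) ≤ (2/(ασ)) e^{α²} (1 + ασ)^{-k}`. -/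
theorem approxError_gauss_le (σ μ α : ℝ) (hσ : 0 < σ) (hα : 0 < α) (k : ℕ) :
    approxError (fun x : ℝ => Real.exp (-(x - μ) ^ 2 / σ ^ 2)) k ≤
      2 / (α * σ) * Real.exp (α ^ 2) * ((1 + α * σ) ^ k)⁻¹ := by
  have hασ : 0 < α * σ := mul_pos hα hσ
  have hstrip : ((1 + α * σ) - (1 + α * σ)⁻¹) / 2 ≤ α * σ := by
    field_simp
    nlinarith
  have hM : ∀ w : ℂ, (1 + α * σ)⁻¹ ≤ ‖w‖ → ‖w‖ ≤ 1 + α * σ →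
      ‖gaussFun σ μ (joukowski w)‖ ≤ Real.exp (α ^ 2) := by
    intro w h₁ h₂
    have him := pow_le_pow_left₀ (abs_nonneg _) ((abs_im_joukowski_le h₁ h₂).trans hstrip) 2
    rw [sq_abs] at him
    refine (norm_gaussFun_le σ μ _).trans (Real.exp_le_exp.mpr ?_)
    rw [div_le_iff₀ (by positivity)]
    linarith [mul_pow α σ 2]
  have h := approxError_le_of_joukowski (lt_add_of_pos_right 1 hασ)
    (fun x _ => gaussFun_ofReal σ μ x) (fun w _ _ => differentiable_gaussFun σ μ _) hM k
  rw [add_sub_cancel_left] at h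
  exact h.trans_eq (by ring)
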